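/- For any intersecting-subset CSS code built from component matrices [1 1] (i.e., for any nonempty families X, Z of subsets of [m] with all pairwise intersections nonempty and nonempty middle layer K), the distances satisfy d_x·d_z ≤ 2^m, with equality if and only if all elements of K have the same Hamming weight. -/
import Mathlib


noncomputable section
open scoped Classical

/-- Hamming weight of an index tuple `v ∈ {0,1}^m`. -/
def wtv {m : ℕ} (v : Fin m → Fin 2) : ℕ :=
  (Finset.univ.filter fun i : Fin m => v i = 1).card

/-- Indicator vector in `{0,1}^m` of a subset of `[m]`. -/
def indFin {m : ℕ} (s : Finset (Fin m)) : Fin m → Fin 2 :=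
  fun k => if k ∈ s then 1 else 0

/-- For any intersecting subset code with nonempty middle layer `K`, the distances
`d_x = 2^{min{m−|v| : v ∈ K}}` and `d_z = 2^{min{|v| : v ∈ K}}` satisfy
`d_x·d_z ≤ 2^m`, with equality iff all elements of `K` have the same Hamming weight. -/
theorem css_intersecting_distance_product_bound {m u v : ℕ}
    (X : Fin (u + 1) → Finset (Fin m)) (Z : Fin (v + 1) → Finset (Fin m))
    (hXZ : ∀ i j, (X i ∩ Z j).Nonempty)
    (K : Set (Fin m → Fin 2))
    (hK : K = {w | ¬ (∃ i, w ≤ indFin (X i)ᶜ) ∧ ¬ (∃ j, indFin (Z j) ≤ w)})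
    (hKne : K.Nonempty) :
    (2 : ℕ) ^ sInf {k : ℕ | ∃ x ∈ K, m - wtv x = k} *
        2 ^ sInf {k : ℕ | ∃ x ∈ K, wtv x = k} ≤ 2 ^ m ∧
    ((2 : ℕ) ^ sInf {k : ℕ | ∃ x ∈ K, m - wtv x = k} *
        2 ^ sInf {k : ℕ | ∃ x ∈ K, wtv x = k} = 2 ^ m ↔
      ∀ x ∈ K, ∀ y ∈ K, wtv x = wtv y) := by
  obtain ⟨x0, hx0⟩ := hKne
  have hwle : ∀ x : Fin m → Fin 2, wtv x ≤ m := fun x =>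
    (Finset.card_filter_le _ _).trans (by simp)
  set A : Set ℕ := {k : ℕ | ∃ x ∈ K, m - wtv x = k} with hAdef
  set B : Set ℕ := {k : ℕ | ∃ x ∈ K, wtv x = k} with hBdef
  have hAne : A.Nonempty := ⟨_, x0, hx0, rfl⟩
  have hBne : B.Nonempty := ⟨_, x0, hx0, rfl⟩
  obtain ⟨xa, hxa, hxaeq⟩ := Nat.sInf_mem hAne
  have hb_le : ∀ y ∈ K, sInf B ≤ wtv y := fun y hy => Nat.sInf_le ⟨y, hy, rfl⟩
  have ha_le : ∀ y ∈ K, sInf A ≤ m - wtv y := fun y hy => Nat.sInf_le ⟨y, hy, rfl⟩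
  have hsum : sInf A + sInf B ≤ m := by
    have h1 : sInf B ≤ wtv xa := hb_le xa hxa
    have h2 : m - wtv xa + wtv xa = m := Nat.sub_add_cancel (hwle xa)
    omega
  have hpow : (2:ℕ) ^ sInf A * 2 ^ sInf B = 2 ^ (sInf A + sInf B) := (pow_add 2 _ _).symm
  constructor
  · rw [hpow]; exact Nat.pow_le_pow_right (by norm_num) hsum
  · rw [hpow]
    have hiff : (2:ℕ) ^ (sInf A + sInf B) = 2 ^ m ↔ sInf A + sInf B = m := by
      constructor
      · exact fun h => Nat.pow_right_injective (by norm_num) h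
      · exact fun h => by rw [h]
    rw [hiff]
    constructor
    · intro heq y hy z hz
      have hwy : wtv y = sInf B := by
        have h1 := hb_le y hy
        have h2 := ha_le y hy
        have h3 := hwle y
        omega
      have hwz : wtv z = sInf B := by
        have h1 := hb_le z hz
        have h2 := ha_le z hz
        have h3 := hwle z
        omega
      rw [hwy, hwz]
    · intro hall
      have hbeq : sInf B = wtv x0 := by
        obtain ⟨xb, hxb, hxbeq⟩ := Nat.sInf_mem hBne
        rw [← hxbeq]; exact hall xb hxb x0 hx0
      have haeq : sInf A = m - wtv x0 := by
        rw [← hxaeq, hall xa hxa x0 hx0]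
      rw [haeq, hbeq]
      exact Nat.sub_add_cancel (hwle x0)
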